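/- arXiv:math/0304495 — 5 statements merged into one kernel-verified Lean document; each statement's English description precedes it below -/
import Mathlib

section
/- Let G be a finite group. Suppose that for each commutative ring R two commutative ring structures are given on the set W_G(R) of functions from conjugacy classes of subgroups of G to R, and that both structures satisfy: (a) for every ring homomorphism h : R → R', the map x ↦ h ∘ x is a ring homomorphism W_G(R) → W_G(R'), and (b) for every subgroup U ≤ G the ghost map φ_U : W_G(R) → R, φ_U(x) = Σ'_{U ⪯ V ≤ G} |(G/V)^U| · x_V^{(V:U)}, is a ring homomorphism. Then the two ring structures coincide for every commutative ring R. -/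
open MulAction Pointwise
open scoped Classical

/-- The set of conjugacy classes of subgroups of `G`: the quotient of the set of
subgroups of `G` by the conjugation action of `G`. -/
abbrev SubgroupConjClasses (G : Type*) [Group G] :=
  MulAction.orbitRel.Quotient (ConjAct G) (Subgroup G)

/-- `U` is subconjugate to `V`: `U ≤ gVg⁻¹` for some `g ∈ G`. -/
def Subconj {G : Type*} [Group G] (U V : Subgroup G) : Prop :=
  ∃ g : ConjAct G, U ≤ g • V

/-- The ghost map `φ_U : W_G(R) → R`,
`φ_U(x) = Σ'_{U ⪯ V ≤ G} |(G/V)^U| · x_V^{(V:U)}`, with exactly one summand for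
each conjugacy class of subgroups `V` of `G` to which `U` is subconjugate. -/
noncomputable def ghost {G : Type*} [Group G] [Fintype G] {R : Type*} [CommRing R]
    (U : Subgroup G) (x : SubgroupConjClasses G → R) : R :=
  ∑ᶠ C : SubgroupConjClasses G,
    if Subconj U (Quotient.out C) then
      (Nat.card (MulAction.fixedPoints U (G ⧸ (Quotient.out C : Subgroup G))) : R) *
        x C ^ (Nat.card (Quotient.out C : Subgroup G) / Nat.card U)
    else 0

/-- The underlying set of the ring of `G`-Witt vectors with coefficients in `R`:
functions from the set of conjugacy classes of subgroups of `G` to `R`. -/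
def WittVec (G : Type u) [Group G] (R : Type v) : Type (max u v) :=
  SubgroupConjClasses G → R


lemma hom_mul {α β : Type*} [CommRing α] [CommRing β] (f : α →+* β) (a b : α) :
    f (a * b) = f a * f b := map_mul f a b

lemma hom_add {α β : Type*} [CommRing α] [CommRing β] (f : α →+* β) (a b : α) :
    f (a + b) = f a + f b := map_add f a b

section Aux

variable {G : Type u} [Group G] [Fintype G]

lemma subconj_refl (V : Subgroup G) : Subconj V V := ⟨1, by rw [one_smul]⟩

lemma subconj_card_le {U V : Subgroup G} (h : Subconj U V) : Nat.card U ≤ Nat.card V := by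
  obtain ⟨g, hg⟩ := h
  calc Nat.card U ≤ Nat.card (g • V : Subgroup G) := Subgroup.card_le_of_le hg
    _ = Nat.card V := Nat.card_congr (Subgroup.equivSMul g V).toEquiv.symm

lemma class_eq_of_subconj_of_card_le {C D : SubgroupConjClasses G}
    (h : Subconj (Quotient.out C) (Quotient.out D))
    (hcard : Nat.card (Quotient.out D : Subgroup G) ≤ Nat.card (Quotient.out C : Subgroup G)) :
    C = D := by
  obtain ⟨g, hg⟩ := h
  have hcard' : Nat.card (g • (Quotient.out D) : Subgroup G)
      ≤ Nat.card (Quotient.out C : Subgroup G) := by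
    rwa [Nat.card_congr (Subgroup.equivSMul g (Quotient.out D)).toEquiv.symm]
  have heq : (Quotient.out C : Subgroup G) = g • Quotient.out D :=
    Subgroup.eq_of_le_of_card_ge hg hcard'
  rw [← Quotient.out_eq C, ← Quotient.out_eq D]
  exact Quotient.sound ⟨g, heq.symm⟩

lemma ghost_inj {R : Type*} [CommRing R] [NoZeroDivisors R] [CharZero R]
    {x y : SubgroupConjClasses G → R}
    (h : ∀ U : Subgroup G, ghost U x = ghost U y) : x = y := by
  haveI : Fintype (SubgroupConjClasses G) := Fintype.ofFinite _
  have cardle : ∀ C : SubgroupConjClasses G,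
      Nat.card (Quotient.out C : Subgroup G) ≤ Fintype.card G := by
    intro C
    rw [← Nat.card_eq_fintype_card]
    exact Nat.card_le_card_of_injective _ Subtype.coe_injective
  have key : ∀ n (C : SubgroupConjClasses G),
      Fintype.card G - Nat.card (Quotient.out C : Subgroup G) < n → x C = y C := by
    intro n
    induction n with
    | zero => intro C hC; omega
    | succ n ih =>
      intro C hC
      set V := (Quotient.out C : Subgroup G) with hV
      have hcard_pos : 0 < Nat.card V := Nat.card_pos
      have hterm : ∀ D ∈ Finset.univ.erase C,
          (if Subconj V (Quotient.out D) then
            (Nat.card (MulAction.fixedPoints V (G ⧸ (Quotient.out D : Subgroup G))) : R) *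
              x D ^ (Nat.card (Quotient.out D : Subgroup G) / Nat.card V)
          else 0)
          = (if Subconj V (Quotient.out D) then
            (Nat.card (MulAction.fixedPoints V (G ⧸ (Quotient.out D : Subgroup G))) : R) *
              y D ^ (Nat.card (Quotient.out D : Subgroup G) / Nat.card V)
          else 0) := by
        intro D hD
        rw [Finset.mem_erase] at hD
        by_cases hc : Subconj V (Quotient.out D)
        · have hle : Nat.card V ≤ Nat.card (Quotient.out D : Subgroup G) := subconj_card_le hc
          have hlt : Nat.card V < Nat.card (Quotient.out D : Subgroup G) := by
            rcases lt_or_ge (Nat.card V) (Nat.card (Quotient.out D : Subgroup G)) with h' | h'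
            · exact h'
            · exact absurd (class_eq_of_subconj_of_card_le hc h').symm hD.1
          have hDle := cardle D
          have hxy : x D = y D := ih D (by omega)
          rw [hxy]
        · simp [hc]
      have hgh := h V
      rw [ghost, ghost, finsum_eq_sum_of_fintype, finsum_eq_sum_of_fintype,
        ← Finset.add_sum_erase _ _ (Finset.mem_univ C),
        ← Finset.add_sum_erase _ _ (Finset.mem_univ C),
        Finset.sum_congr rfl hterm] at hgh
      have hsum := add_right_cancel hgh
      have hC' : Subconj V (Quotient.out C) := subconj_refl V
      rw [if_pos hC', if_pos hC'] at hsum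
      rw [show (Quotient.out C : Subgroup G) = V from rfl] at hsum
      rw [Nat.div_self hcard_pos, pow_one, pow_one] at hsum
      have hne : (Nat.card (MulAction.fixedPoints V (G ⧸ V)) : R) ≠ 0 := by
        have hmem : ((1 : G) : G ⧸ V) ∈ MulAction.fixedPoints V (G ⧸ V) := by
          intro u
          rw [show u • ((1 : G) : G ⧸ V) = (u : G) • ((1 : G) : G ⧸ V) from rfl,
            MulAction.Quotient.smul_mk, smul_eq_mul, mul_one, QuotientGroup.eq]
          simpa using u.2
        haveI : Nonempty (MulAction.fixedPoints V (G ⧸ V)) := ⟨⟨_, hmem⟩⟩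
        have hpos : 0 < Nat.card (MulAction.fixedPoints V (G ⧸ V)) := Nat.card_pos
        exact_mod_cast hpos.ne'
      exact mul_left_cancel₀ hne hsum
  funext C
  exact key (Fintype.card G + 1) C (by have := cardle C; omega)

end Aux

/-- The universal coefficient ring: polynomials over `ℤ` in two families of variables
indexed by the conjugacy classes of subgroups of `G`. -/
abbrev UnivRing (G : Type u) [Group G] : Type u :=
  MvPolynomial (SubgroupConjClasses G × Bool) ℤ

/-- The first generic Witt vector. -/
noncomputable def genX (G : Type u) [Group G] : WittVec G (UnivRing G) :=
  fun C => MvPolynomial.X (C, false)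

/-- The second generic Witt vector. -/
noncomputable def genY (G : Type u) [Group G] : WittVec G (UnivRing G) :=
  fun C => MvPolynomial.X (C, true)

/-- **Uniqueness part of the theorem of Dress and Siebeneicher.**  Suppose that for
each commutative ring `R` two commutative ring structures `W₁ R`, `W₂ R` are given
on the set `W_G(R)` of functions from conjugacy classes of subgroups of `G` to `R`,
both satisfying: (a) for every ring homomorphism `h : R → R'` the map `x ↦ h ∘ x`
is a ring homomorphism, and (b) for every subgroup `U ≤ G` the ghost map
`φ_U : W_G(R) → R` is a ring homomorphism.  Then the two ring structures coincide
for every commutative ring `R`. -/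
theorem witt_vectors_unique (G : Type u) [Group G] [Fintype G]
    (W₁ W₂ : ∀ (R : Type u) [CommRing R], CommRing (WittVec G R))
    (h₁a : ∀ (R R' : Type u) [CommRing R] [CommRing R'] (h : R →+* R'),
      letI := W₁ R
      letI := W₁ R'
      ∃ f : WittVec G R →+* WittVec G R', ∀ x : WittVec G R, f x = h ∘ x)
    (h₁b : ∀ (R : Type u) [CommRing R] (U : Subgroup G),
      letI := W₁ R
      ∃ f : WittVec G R →+* R, ∀ x : WittVec G R, f x = ghost U x)
    (h₂a : ∀ (R R' : Type u) [CommRing R] [CommRing R'] (h : R →+* R'),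
      letI := W₂ R
      letI := W₂ R'
      ∃ f : WittVec G R →+* WittVec G R', ∀ x : WittVec G R, f x = h ∘ x)
    (h₂b : ∀ (R : Type u) [CommRing R] (U : Subgroup G),
      letI := W₂ R
      ∃ f : WittVec G R →+* R, ∀ x : WittVec G R, f x = ghost U x) :
    ∀ (R : Type u) [CommRing R], W₁ R = W₂ R :=  by
  have hXYmul : (letI := W₁ (UnivRing G); genX G * genY G)
      = (letI := W₂ (UnivRing G); genX G * genY G) := by
    apply ghost_inj
    intro U
    obtain ⟨f₁, hf₁⟩ := h₁b (UnivRing G) U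
    obtain ⟨f₂, hf₂⟩ := h₂b (UnivRing G) U
    have s₁ : ghost U (letI := W₁ (UnivRing G); genX G * genY G)
        = ghost U (genX G) * ghost U (genY G) := by
      rw [← hf₁, ← hf₁ (genX G), ← hf₁ (genY G)]
      exact @hom_mul _ _ (W₁ (UnivRing G)) _ f₁ _ _
    have s₂ : ghost U (letI := W₂ (UnivRing G); genX G * genY G)
        = ghost U (genX G) * ghost U (genY G) := by
      rw [← hf₂, ← hf₂ (genX G), ← hf₂ (genY G)]
      exact @hom_mul _ _ (W₂ (UnivRing G)) _ f₂ _ _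
    rw [s₁, s₂]
  have hXYadd : (letI := W₁ (UnivRing G); genX G + genY G)
      = (letI := W₂ (UnivRing G); genX G + genY G) := by
    apply ghost_inj
    intro U
    obtain ⟨f₁, hf₁⟩ := h₁b (UnivRing G) U
    obtain ⟨f₂, hf₂⟩ := h₂b (UnivRing G) U
    have s₁ : ghost U (letI := W₁ (UnivRing G); genX G + genY G)
        = ghost U (genX G) + ghost U (genY G) := by
      rw [← hf₁, ← hf₁ (genX G), ← hf₁ (genY G)]
      exact @hom_add _ _ (W₁ (UnivRing G)) _ f₁ _ _
    have s₂ : ghost U (letI := W₂ (UnivRing G); genX G + genY G)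
        = ghost U (genX G) + ghost U (genY G) := by
      rw [← hf₂, ← hf₂ (genX G), ← hf₂ (genY G)]
      exact @hom_add _ _ (W₂ (UnivRing G)) _ f₂ _ _
    rw [s₁, s₂]
  intro R _
  have spec : ∀ x y : WittVec G R,
      ∃ e : UnivRing G →+* R, e ∘ genX G = x ∧ e ∘ genY G = y := by
    intro x y
    refine ⟨MvPolynomial.eval₂Hom (Int.castRingHom R)
      (fun p => cond p.2 (y p.1) (x p.1)), ?_, ?_⟩
    · funext C; exact MvPolynomial.eval₂Hom_X' _ _ _
    · funext C; exact MvPolynomial.eval₂Hom_X' _ _ _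
  apply CommRing.ext
  · funext x y
    obtain ⟨e, heX, heY⟩ := spec x y
    obtain ⟨f₁, hf₁⟩ := h₁a (UnivRing G) R e
    obtain ⟨f₂, hf₂⟩ := h₂a (UnivRing G) R e
    have k₁ : (letI := W₁ R; x + y)
        = e ∘ (letI := W₁ (UnivRing G); genX G + genY G) := by
      have h1 : f₁ ((letI := W₁ (UnivRing G); genX G + genY G))
          = (letI := W₁ R; f₁ (genX G) + f₁ (genY G)) := @hom_add _ _ (W₁ (UnivRing G)) (W₁ R) f₁ _ _
      rw [hf₁, hf₁, hf₁, heX, heY] at h1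
      exact h1.symm
    have k₂ : (letI := W₂ R; x + y)
        = e ∘ (letI := W₂ (UnivRing G); genX G + genY G) := by
      have h2 : f₂ ((letI := W₂ (UnivRing G); genX G + genY G))
          = (letI := W₂ R; f₂ (genX G) + f₂ (genY G)) := @hom_add _ _ (W₂ (UnivRing G)) (W₂ R) f₂ _ _
      rw [hf₂, hf₂, hf₂, heX, heY] at h2
      exact h2.symm
    rw [k₁, k₂, hXYadd]
  · funext x y
    obtain ⟨e, heX, heY⟩ := spec x y
    obtain ⟨f₁, hf₁⟩ := h₁a (UnivRing G) R e
    obtain ⟨f₂, hf₂⟩ := h₂a (UnivRing G) R e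
    have k₁ : (letI := W₁ R; x * y)
        = e ∘ (letI := W₁ (UnivRing G); genX G * genY G) := by
      have h1 : f₁ ((letI := W₁ (UnivRing G); genX G * genY G))
          = (letI := W₁ R; f₁ (genX G) * f₁ (genY G)) := @hom_mul _ _ (W₁ (UnivRing G)) (W₁ R) f₁ _ _
      rw [hf₁, hf₁, hf₁, heX, heY] at h1
      exact h1.symm
    have k₂ : (letI := W₂ R; x * y)
        = e ∘ (letI := W₂ (UnivRing G); genX G * genY G) := by
      have h2 : f₂ ((letI := W₂ (UnivRing G); genX G * genY G))
          = (letI := W₂ R; f₂ (genX G) * f₂ (genY G)) := @hom_mul _ _ (W₂ (UnivRing G)) (W₂ R) f₂ _ _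
      rw [hf₂, hf₂, hf₂, heX, heY] at h2
      exact h2.symm
    rw [k₁, k₂, hXYmul]
end

section
/- Let G be a finite group and let R be a commutative ring whose additive group is torsion-free (i.e. n·r = 0 with n a positive integer implies r = 0). Then the total ghost map φ : W_G(R) → Π'_{U ≤ G} R, sending x to the family (φ_U(x))'_{U ≤ G} indexed by conjugacy classes of subgroups U of G, is injective. -/
open MulAction Pointwise
open scoped Classical

/-!
The ghost map is unitriangular up to the nonzero diagonal factors `|(G/U)^U|` with respect
to the order of conjugacy classes by the size of their members: in `φ_U(x)` every summand
other than the one for `U` itself involves a class of strictly larger subgroups. Hence if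
`φ(x) = φ(y)`, downward induction on `|U|` gives `|(G/U)^U| · (x_U - y_U) = 0`, and
torsion-freeness gives `x_U = y_U`.
-/

section

variable {G : Type*} [Group G]

theorem Subgroup.card_conjAct_smul (g : ConjAct G) (V : Subgroup G) :
    Nat.card (g • V : Subgroup G) = Nat.card V :=
  (Nat.card_congr (Subgroup.equivSMul g V).toEquiv).symm

theorem Subconj.refl (U : Subgroup G) : Subconj U U :=
  ⟨1, by rw [one_smul]⟩

variable [Finite G] {U V : Subgroup G}

theorem Subconj.card_le (h : Subconj U V) : Nat.card U ≤ Nat.card V := by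
  obtain ⟨g, hg⟩ := h
  simpa only [Subgroup.card_conjAct_smul] using Subgroup.card_le_of_le hg

theorem Subconj.mk_eq_mk_of_card_le (h : Subconj U V) (hcard : Nat.card V ≤ Nat.card U) :
    (Quotient.mk'' U : SubgroupConjClasses G) = Quotient.mk'' V := by
  obtain ⟨g, hg⟩ := h
  have hU : U = g • V :=
    Subgroup.eq_of_le_of_card_ge hg (by rwa [Subgroup.card_conjAct_smul])
  exact Quotient.sound ⟨g, hU.symm⟩

theorem card_fixedPoints_quotient_self_pos (U : Subgroup G) :
    0 < Nat.card (fixedPoints U (G ⧸ U)) := by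
  have hone : (QuotientGroup.mk 1 : G ⧸ U) ∈ fixedPoints U (G ⧸ U) := fun u =>
    QuotientGroup.eq.mpr (by simp)
  exact Nat.card_pos_iff.mpr ⟨⟨_, hone⟩, Set.toFinite _⟩

end

theorem ghost_out_sub_ghost_out {G : Type*} [Group G] [Fintype G] {R : Type*} [CommRing R]
    (C : SubgroupConjClasses G) {x y : SubgroupConjClasses G → R}
    (hlarger : ∀ D : SubgroupConjClasses G,
      Nat.card (Quotient.out C : Subgroup G) < Nat.card (Quotient.out D : Subgroup G) →
        x D = y D) :
    ghost (Quotient.out C) x - ghost (Quotient.out C) y =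
      (Nat.card (fixedPoints (Quotient.out C : Subgroup G) (G ⧸ (Quotient.out C : Subgroup G)))
        : R) * (x C - y C) := by
  rw [ghost, ghost, finsum_eq_sum_of_fintype, finsum_eq_sum_of_fintype,
    ← Finset.sum_sub_distrib, Finset.sum_eq_single C]
  · rw [if_pos (Subconj.refl _), if_pos (Subconj.refl _), Nat.div_self Nat.card_pos,
      pow_one, pow_one, mul_sub]
  · intro D _ hDC
    by_cases hsub : Subconj (Quotient.out C) (Quotient.out D)
    · have hlt :
          Nat.card (Quotient.out C : Subgroup G) < Nat.card (Quotient.out D : Subgroup G) :=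
        lt_of_not_ge fun hle => hDC <| by
          simpa only [Quotient.out_eq] using (hsub.mk_eq_mk_of_card_le hle).symm
      rw [hlarger D hlt, sub_self]
    · rw [if_neg hsub, if_neg hsub, sub_self]
  · exact fun hC => absurd (Finset.mem_univ C) hC

/-- If the additive group of the commutative ring `R` is torsion-free, then the total
ghost map `φ : W_G(R) → Π'_{U ≤ G} R`, sending a Witt vector `x` to the family
`(φ_U(x))'_{U ≤ G}` indexed by the conjugacy classes of subgroups `U` of `G`, is
injective. -/
theorem ghost_map_injective (G : Type u) [Group G] [Fintype G]
    (R : Type v) [CommRing R]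
    (htf : ∀ (n : ℕ) (r : R), 0 < n → n • r = 0 → r = 0) :
    Function.Injective
      (fun (x : SubgroupConjClasses G → R) (C : SubgroupConjClasses G) =>
        ghost (Quotient.out C) x) := by
  intro x y hxy
  funext C
  induction C using (measure fun C : SubgroupConjClasses G =>
      Nat.card G - Nat.card (Quotient.out C : Subgroup G)).wf.induction with
  | h C ih =>
    have hlarger : ∀ D : SubgroupConjClasses G,
        Nat.card (Quotient.out C : Subgroup G) < Nat.card (Quotient.out D : Subgroup G) →
          x D = y D := fun D hD =>
      ih D (by
        have := Subgroup.card_le_card_group (Quotient.out D : Subgroup G)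
        show Nat.card G - _ < Nat.card G - _
        omega)
    have hdiag := ghost_out_sub_ghost_out C hlarger
    rw [show ghost (Quotient.out C) x = ghost (Quotient.out C) y from congrFun hxy C, sub_self,
      ← nsmul_eq_mul] at hdiag
    exact sub_eq_zero.mp (htf _ _ (card_fixedPoints_quotient_self_pos _) hdiag.symm)
end

section
/- Let G be a finite group, U ≤ G a subgroup, R a commutative ring, and s, t ∈ R. Let G act on the set 𝒰(G) of subsets of G by (g, A) ↦ Ag⁻¹; for a subset A ⊆ G let U_A := {g ∈ G | Ag = A} be its stabilizer group and i_A := |A|/|U_A| the number of orbits of the right U_A-action on A. Then (s + t)^{(G:U)} = Σ_{G·A ∈ G\𝒰(G)} |(G/U_A)^U| · (s^{i_A} · t^{i_{G−A}})^{(U_A:U)}, where the sum is over a set of representatives A of the G-orbits of subsets of G, G−A denotes the complement of A in G, the exponent (U_A:U) means |U_A|/|U|, and any summand with |(G/U_A)^U| = 0 (which happens unless some conjugate of U is contained in U_A) is zero. -/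
/-!
Expanding `(s + t)^{(G:U)}` over the subsets `S ⊆ G/U` and pulling them back along `G → G/U`
identifies the terms with the subsets `A ⊆ G` that are unions of left cosets of `U`, i.e. with the
`U`-fixed points of `𝒰(G)`. Such an `A` is also a union of cosets of `U_A ≥ U`, so it contributes
`s^{|A|/|U|} t^{|G−A|/|U|} = (s^{i_A} t^{i_{G−A}})^{(U_A:U)}`. This summand is constant on
`G`-orbits, and the `U`-fixed points of an orbit `G·A ≅ G/U_A` number `|(G/U_A)^U|`.
-/

open MulAction

/-- Type synonym for `Set G`, carrying the right-translation action
`(g, A) ↦ Ag⁻¹` of `G` on the set `𝒰(G)` of subsets of `G`. -/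
def RSet (G : Type u) : Type u := Set G

/-- The action `(g, A) ↦ Ag⁻¹` of `G` on the set of subsets of `G`. -/
instance RSet.instMulAction (G : Type u) [Group G] : MulAction G (RSet G) where
  smul g A := (fun a => a * g⁻¹) '' (A : Set G)
  one_smul A := by
    change Set G at A
    show (fun a => a * (1 : G)⁻¹) '' (A : Set G) = A
    simp
  mul_smul g h A := by
    change Set G at A
    show (fun a => a * (g * h)⁻¹) '' (A : Set G)
        = (fun a => a * g⁻¹) '' ((fun a => a * h⁻¹) '' (A : Set G))
    rw [Set.image_image]
    simp [mul_assoc, mul_inv_rev]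

/-- The stabilizer group `U_A = {g ∈ G | Ag = A}` of a subset `A ⊆ G` under the
right-translation action. -/
def rstab {G : Type u} [Group G] (A : Set G) : Subgroup G :=
  MulAction.stabilizer G (show RSet G from A)

/-- `i_A := |A|/|U_A|`, the number of orbits of the right `U_A`-action on `A`. -/
noncomputable def iA {G : Type u} [Group G] (A : Set G) : ℕ :=
  Nat.card A / Nat.card (rstab A)

theorem add_pow_card_eq_finsum_set {α R : Type*} [Finite α] [CommSemiring R] (a b : R) :
    (a + b) ^ Nat.card α = ∑ᶠ S : Set α, a ^ Nat.card S * b ^ Nat.card ↥Sᶜ := by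
  classical
  have := Fintype.ofFinite α
  rw [Nat.card_eq_fintype_card, ← Fintype.sum_pow_mul_eq_add_pow, ← finsum_eq_sum_of_fintype]
  refine finsum_eq_of_bijective _ Fintype.finsetEquivSet.bijective fun S => ?_
  rw [Fintype.coe_finsetEquivSet, ← Finset.coe_compl, Nat.card_coe_set_eq, Nat.card_coe_set_eq,
    Set.ncard_coe_finset, Set.ncard_coe_finset, Finset.card_compl]

namespace MulAction

variable {G X : Type*} [Group G] [MulAction G X]

theorem mem_fixedPoints_iff_le_stabilizer {U : Subgroup G} {x : X} :
    x ∈ fixedPoints U X ↔ U ≤ stabilizer G x :=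
  ⟨fun h u hu => h ⟨u, hu⟩, fun h u => h u.2⟩

theorem image_ofQuotientStabilizer_fixedPoints (U : Subgroup G) (x : X) :
    ofQuotientStabilizer G x '' fixedPoints U (G ⧸ stabilizer G x) =
      fixedPoints U X ∩ orbit G x := by
  ext y
  constructor
  · rintro ⟨q, hq, rfl⟩
    refine ⟨fun u => ?_, ?_⟩
    · change (u : G) • ofQuotientStabilizer G x q = _
      rw [← ofQuotientStabilizer_smul]
      exact congrArg _ (hq u)
    · induction q using QuotientGroup.induction_on with
      | H g => exact ⟨g, rfl⟩
  · rintro ⟨hy, g, rfl⟩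
    refine ⟨g, fun u => injective_ofQuotientStabilizer G x ?_, rfl⟩
    change ofQuotientStabilizer G x ((u : G) • (g : G ⧸ stabilizer G x)) = _
    rw [ofQuotientStabilizer_smul]
    exact hy u

theorem card_fixedPoints_inter_orbit (U : Subgroup G) (x : X) :
    Nat.card (fixedPoints U X ∩ orbit G x : Set X) =
      Nat.card (fixedPoints U (G ⧸ stabilizer G x)) := by
  rw [← image_ofQuotientStabilizer_fixedPoints,
    Nat.card_image_of_injective (injective_ofQuotientStabilizer G x)]

theorem finsum_mem_fixedPoints_eq_finsum_orbits {M : Type*} [AddCommMonoid M] [Finite X]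
    (U : Subgroup G) (f : X → M) (hf : ∀ (g : G) (x : X), f (g • x) = f x) :
    ∑ᶠ x ∈ fixedPoints U X, f x =
      ∑ᶠ C : orbitRel.Quotient G X,
        Nat.card (fixedPoints U (G ⧸ stabilizer G C.out)) • f C.out := by
  classical
  have := Fintype.ofFinite X
  have := Fintype.ofFinite (orbitRel.Quotient G X)
  rw [finsum_mem_eq_toFinset_sum, finsum_eq_sum_of_fintype,
    ← Finset.sum_fiberwise _ (fun x => (Quotient.mk _ x : orbitRel.Quotient G X))]
  refine Finset.sum_congr rfl fun C _ => ?_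
  have mk_eq_iff : ∀ x, (Quotient.mk _ x : orbitRel.Quotient G X) = C ↔ x ∈ orbit G C.out :=
    fun x => by
      rw [← orbitRel.Quotient.mem_orbit, orbitRel.Quotient.orbit_eq_orbit_out C Quotient.out_eq']
  have card_fiber : ({x ∈ (fixedPoints U X).toFinset | Quotient.mk _ x = C}).card =
      Nat.card (fixedPoints U X ∩ orbit G C.out : Set X) := by
    rw [Nat.card_eq_card_toFinset]
    congr 1
    ext x
    simp [mk_eq_iff]
  rw [← card_fixedPoints_inter_orbit, ← card_fiber, ← Finset.sum_const]
  refine Finset.sum_congr rfl fun x hx => ?_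
  obtain ⟨g, rfl⟩ := (mk_eq_iff x).1 (Finset.mem_filter.1 hx).2
  exact hf g _

end MulAction

namespace RSet

variable {G : Type*} [Group G]

instance [Finite G] : Finite (RSet G) :=
  inferInstanceAs (Finite (Set G))

theorem smul_eq_preimage (g : G) (A : RSet G) : g • A = ((· * g) ⁻¹' A : Set G) := by
  refine Set.ext fun a => ?_
  refine ⟨?_, fun ha => ⟨a * g, ha, mul_inv_cancel_right a g⟩⟩
  rintro ⟨b, hb, rfl⟩
  change b * g⁻¹ * g ∈ (show Set G from A)
  rwa [inv_mul_cancel_right]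

theorem mem_rstab_iff {g : G} {A : Set G} : g ∈ rstab A ↔ (· * g) ⁻¹' A = A :=
  (mem_stabilizer_iff).trans (by rw [smul_eq_preimage]; rfl)

theorem rstab_compl (A : Set G) : rstab Aᶜ = rstab A := by
  ext g
  rw [mem_rstab_iff, mem_rstab_iff, Set.preimage_compl, compl_inj_iff]

theorem le_rstab_preimage_mk (U : Subgroup G) (S : Set (G ⧸ U)) :
    U ≤ rstab ((QuotientGroup.mk : G → G ⧸ U) ⁻¹' S) := fun u hu => by
  rw [mem_rstab_iff]
  ext a
  simp [QuotientGroup.mk_mul_of_mem a hu]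

theorem preimage_image_mk_of_le_rstab {U : Subgroup G} {A : Set G} (hU : U ≤ rstab A) :
    (QuotientGroup.mk : G → G ⧸ U) ⁻¹' (QuotientGroup.mk '' A) = A := by
  rw [QuotientGroup.preimage_image_mk]
  simp_rw [mem_rstab_iff.1 (hU (Subtype.property _))]
  exact Set.iUnion_const A

theorem card_eq_card_mul_card_image_mk {U : Subgroup G} {A : Set G} (hU : U ≤ rstab A) :
    Nat.card A = Nat.card U * Nat.card ((QuotientGroup.mk : G → G ⧸ U) '' A) := by
  conv_lhs => rw [← preimage_image_mk_of_le_rstab hU]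
  exact QuotientGroup.card_preimage_mk U _

theorem card_eq_card_rstab_mul_iA (A : Set G) : Nat.card A = Nat.card (rstab A) * iA A :=
  (Nat.mul_div_cancel' (Dvd.intro _ (card_eq_card_mul_card_image_mk le_rfl).symm)).symm

theorem card_div_card_eq_mul_iA {U : Subgroup G} {A : Set G} (hU : U ≤ rstab A) :
    Nat.card A / Nat.card U = Nat.card (rstab A) / Nat.card U * iA A := by
  rw [Nat.div_mul_right_comm (Subgroup.card_dvd_of_le hU), ← card_eq_card_rstab_mul_iA]

theorem card_rstab_preimage_mul_right (g : G) (A : Set G) :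
    Nat.card (rstab ((· * g) ⁻¹' A)) = Nat.card (rstab A) :=
  (Nat.card_congr (stabilizerEquivStabilizer (smul_eq_preimage g A).symm).toEquiv).symm

theorem iA_preimage_mul_right (g : G) (A : Set G) : iA ((· * g) ⁻¹' A) = iA A := by
  have card_preimage : Nat.card ((· * g) ⁻¹' A) = Nat.card A :=
    Nat.card_preimage_of_injective (mul_left_injective g)
      fun a _ => ⟨a * g⁻¹, inv_mul_cancel_right a g⟩
  rw [iA, iA, card_preimage, card_rstab_preimage_mul_right]

theorem finsum_set_quotient_eq_finsum_le_rstab [Finite G] {M : Type*} [AddCommMonoid M]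
    (U : Subgroup G) (φ : ℕ → ℕ → M) :
    ∑ᶠ S : Set (G ⧸ U), φ (Nat.card S) (Nat.card ↥Sᶜ) =
      ∑ᶠ A ∈ {A : Set G | U ≤ rstab A},
        φ (Nat.card A / Nat.card U) (Nat.card ↥Aᶜ / Nat.card U) := by
  rw [← finsum_mem_univ]
  refine finsum_mem_eq_of_bijOn (QuotientGroup.mk ⁻¹' ·)
    ⟨fun S _ => le_rstab_preimage_mk U S,
      QuotientGroup.mk_surjective.preimage_injective.injOn,
      fun A hA => ⟨_, trivial, preimage_image_mk_of_le_rstab hA⟩⟩ fun S _ => ?_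
  rw [← Set.preimage_compl, QuotientGroup.card_preimage_mk, QuotientGroup.card_preimage_mk,
    Nat.mul_div_cancel_left _ Nat.card_pos, Nat.mul_div_cancel_left _ Nat.card_pos]

section ghostSummand

variable {R : Type*} [CommMonoid R]

noncomputable def ghostSummand (U : Subgroup G) (s t : R) (A : Set G) : R :=
  (s ^ iA A * t ^ iA Aᶜ) ^ (Nat.card (rstab A) / Nat.card U)

theorem ghostSummand_preimage_mul_right (U : Subgroup G) (s t : R) (g : G) (A : Set G) :
    ghostSummand U s t ((· * g) ⁻¹' A) = ghostSummand U s t A := by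
  rw [ghostSummand, ghostSummand, ← Set.preimage_compl, iA_preimage_mul_right,
    iA_preimage_mul_right, card_rstab_preimage_mul_right]

theorem ghostSummand_smul (U : Subgroup G) (s t : R) (g : G) (A : RSet G) :
    ghostSummand U s t (g • A) = ghostSummand U s t A :=
  (congrArg _ (smul_eq_preimage g A)).trans (ghostSummand_preimage_mul_right U s t g A)

theorem pow_card_div_mul_pow_card_compl_div_eq_ghostSummand {U : Subgroup G} {A : Set G}
    (hU : U ≤ rstab A) (s t : R) :
    s ^ (Nat.card A / Nat.card U) * t ^ (Nat.card ↥Aᶜ / Nat.card U) = ghostSummand U s t A := by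
  rw [card_div_card_eq_mul_iA hU, card_div_card_eq_mul_iA (rstab_compl A ▸ hU), rstab_compl,
    ghostSummand, pow_mul', pow_mul', mul_pow]

end ghostSummand

end RSet

/-- For every subgroup `U ≤ G` and all `s, t` in a commutative ring `R`,
`(s + t)^{(G:U)} = Σ_{G·A ∈ G\𝒰(G)} |(G/U_A)^U| · (s^{i_A} · t^{i_{G−A}})^{(U_A:U)}`,
the sum being taken over representatives `A` of the orbits of the right-translation
action of `G` on the set of subsets of `G`. -/
theorem sum_ghost_component_formula (G : Type u) [Group G] [Fintype G] (U : Subgroup G)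
    (R : Type v) [CommRing R] (s t : R) :
    (s + t) ^ (Nat.card G / Nat.card U) =
      ∑ᶠ C : MulAction.orbitRel.Quotient G (RSet G),
        (Nat.card (MulAction.fixedPoints U
            (G ⧸ rstab (show Set G from Quotient.out C))) : R) *
          (s ^ iA (show Set G from Quotient.out C) *
            t ^ iA ((show Set G from Quotient.out C)ᶜ)) ^
            (Nat.card (rstab (show Set G from Quotient.out C)) / Nat.card U) := by
  calc (s + t) ^ (Nat.card G / Nat.card U)
      = (s + t) ^ Nat.card (G ⧸ U) := by
        rw [← Subgroup.index_eq_card, ← U.card_mul_index, Nat.mul_div_cancel_left _ Nat.card_pos]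
    _ = ∑ᶠ S : Set (G ⧸ U), s ^ Nat.card S * t ^ Nat.card ↥Sᶜ := add_pow_card_eq_finsum_set s t
    _ = ∑ᶠ A ∈ {A : Set G | U ≤ rstab A},
          s ^ (Nat.card A / Nat.card U) * t ^ (Nat.card ↥Aᶜ / Nat.card U) :=
        RSet.finsum_set_quotient_eq_finsum_le_rstab U fun m n => s ^ m * t ^ n
    _ = ∑ᶠ A ∈ fixedPoints U (RSet G), RSet.ghostSummand U s t A :=
        finsum_mem_congr (Set.ext fun _ => mem_fixedPoints_iff_le_stabilizer.symm)
          fun _ hA => RSet.pow_card_div_mul_pow_card_compl_div_eq_ghostSummand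
            (mem_fixedPoints_iff_le_stabilizer.1 hA) s t
    _ = _ := (finsum_mem_fixedPoints_eq_finsum_orbits U _ (RSet.ghostSummand_smul U s t)).trans
        (finsum_congr fun _ => nsmul_eq_mul _ _)
end

section
/- Let G be a finite group, R a commutative ring, H, V, W ≤ G subgroups, and s, t ∈ R. Then the modified Mackey formula holds: (|(G/V)^H| · s^{(V:H)}) · (|(G/W)^H| · t^{(W:H)}) = Σ_{VgW ∈ V\G/W} |(G/(V ∩ gWg⁻¹))^H| · (s^{(V : V ∩ gWg⁻¹)} · t^{(W : g⁻¹Vg ∩ W)})^{(V ∩ gWg⁻¹ : H)}, where the sum is over a set of representatives g of the double cosets V\G/W, the exponent (K:L) means |K|/|L|, and any summand whose fixed-point count |(G/K)^H| vanishes (which happens unless some conjugate of H is contained in K) is zero. -/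
/-!
Write `T(K) = {g | H ≤ gKg⁻¹}` for the preimage of `(G/K)^H` in `G`, so that
`|T(K)| = |K| · |(G/K)^H|`. Pairs `(a, b) ∈ T(V) × T(W)` correspond to pairs `(c, a)` with
`a ∈ T(V ∩ cWc⁻¹)` via `c = a⁻¹b`, hence
`|V||W| · |(G/V)^H| · |(G/W)^H| = Σ_{c ∈ G} |T(V ∩ cWc⁻¹)|`.
The summand only depends on the double coset `VcW`, which has `|V||W| / |V ∩ cWc⁻¹|` elements;
collecting terms gives the Mackey formula for the fixed-point counts. The powers of `s` and `t`
then agree termwise: a nonzero `|(G/K)^H|` forces `|H| ∣ |K|`, so `(V:K)(K:H) = (V:H)`, and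
`g⁻¹Vg ∩ W` is conjugate to `V ∩ gWg⁻¹`.
-/

open MulAction Pointwise

namespace Subgroup

variable {G : Type*} [Group G]

theorem stabilizer_mk (H K : Subgroup G) (g : G) :
    stabilizer H (g : G ⧸ K) = (ConjAct.toConjAct g • K).subgroupOf H := by
  ext h
  rw [mem_stabilizer_iff, mem_subgroupOf, mem_pointwise_smul_iff_inv_smul_mem,
    ← ConjAct.toConjAct_inv, ConjAct.toConjAct_smul, inv_inv, ← K.inv_mem_iff]
  change ((h * g : G) : G ⧸ K) = g ↔ _
  rw [QuotientGroup.eq]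
  group

theorem card_stabilizer_mk (V W : Subgroup G) (g : G) :
    Nat.card (stabilizer V (g : G ⧸ W)) =
      Nat.card (V ⊓ ConjAct.toConjAct g • W : Subgroup G) := by
  rw [stabilizer_mk, ← inf_subgroupOf_left]
  exact Nat.card_congr (subgroupOfEquivOfLe inf_le_left).toEquiv

theorem card_conjAct_smul_s7 (g : G) (K : Subgroup G) :
    Nat.card (ConjAct.toConjAct g • K : Subgroup G) = Nat.card K :=
  Nat.card_congr (equivSMul _ K).toEquiv.symm

theorem card_inv_smul_inf (V W : Subgroup G) (g : G) :
    Nat.card (ConjAct.toConjAct g⁻¹ • V ⊓ W : Subgroup G) =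
      Nat.card (V ⊓ ConjAct.toConjAct g • W : Subgroup G) := by
  rw [← card_conjAct_smul_s7 g⁻¹ (V ⊓ _), smul_inf, smul_smul, ← map_mul, inv_mul_cancel, map_one,
    one_smul]

theorem inf_smul_mul_mul_eq (V W : Subgroup G) {v w : G} (hv : v ∈ V) (hw : w ∈ W) (g : G) :
    V ⊓ ConjAct.toConjAct (v * g * w) • W =
      ConjAct.toConjAct v • (V ⊓ ConjAct.toConjAct g • W) := by
  rw [smul_inf, conjAct_pointwise_smul_eq_self (le_normalizer hv), map_mul, map_mul, mul_smul,
    mul_smul, conjAct_pointwise_smul_eq_self (le_normalizer hw)]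

def conjTransporter (H K : Subgroup G) : Set G := {g | H ≤ ConjAct.toConjAct g • K}

theorem mk_mem_fixedPoints_iff {H K : Subgroup G} {g : G} :
    (g : G ⧸ K) ∈ fixedPoints H (G ⧸ K) ↔ g ∈ conjTransporter H K := by
  rw [conjTransporter, Set.mem_ofPred_eq, ← subgroupOf_eq_top, ← stabilizer_mk, eq_top_iff]
  simp [SetLike.le_def, mem_stabilizer_iff, mem_fixedPoints]

theorem card_conjTransporter (H K : Subgroup G) :
    Nat.card (conjTransporter H K) = Nat.card K * Nat.card (fixedPoints H (G ⧸ K)) := by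
  have : QuotientGroup.mk ⁻¹' fixedPoints H (G ⧸ K) = conjTransporter H K :=
    Set.ext fun _ => mk_mem_fixedPoints_iff
  rw [← this, Nat.card_congr (QuotientGroup.preimageMkEquivSubgroupProdSet K _), Nat.card_prod]

theorem card_dvd_of_mem_conjTransporter {H K : Subgroup G} {g : G}
    (hg : g ∈ conjTransporter H K) : Nat.card H ∣ Nat.card K :=
  card_conjAct_smul_s7 g K ▸ card_dvd_of_le hg

theorem card_dvd_of_card_fixedPoints_ne_zero {H K : Subgroup G}
    (h : Nat.card (fixedPoints H (G ⧸ K)) ≠ 0) : Nat.card H ∣ Nat.card K := by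
  obtain ⟨⟨x, hx⟩⟩ := (Nat.card_ne_zero.1 h).1
  obtain ⟨g, rfl⟩ := QuotientGroup.mk_surjective x
  exact card_dvd_of_mem_conjTransporter (mk_mem_fixedPoints_iff.1 hx)

theorem mem_conjTransporter_smul {H K : Subgroup G} {c g : G} :
    g ∈ conjTransporter H (ConjAct.toConjAct c • K) ↔ g * c ∈ conjTransporter H K := by
  simp [conjTransporter, smul_smul]

theorem card_conjTransporter_smul (H K : Subgroup G) (c : G) :
    Nat.card (conjTransporter H (ConjAct.toConjAct c • K)) = Nat.card (conjTransporter H K) :=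
  Nat.card_congr (Equiv.subtypeEquiv (Equiv.mulRight c) fun _ => mem_conjTransporter_smul)

theorem conjTransporter_inf (H K L : Subgroup G) :
    conjTransporter H (K ⊓ L) = conjTransporter H K ∩ conjTransporter H L := by
  ext g
  simp [conjTransporter]

def conjTransporterProdEquiv (H V W : Subgroup G) :
    conjTransporter H V × conjTransporter H W ≃
      Σ c : G, conjTransporter H (V ⊓ ConjAct.toConjAct c • W) where
  toFun p := ⟨(p.1 : G)⁻¹ * p.2, p.1, by
    rw [conjTransporter_inf]
    exact ⟨p.1.2, mem_conjTransporter_smul.2 (by simp [p.2.2])⟩⟩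
  invFun x := (⟨x.2, ((conjTransporter_inf _ _ _).subset x.2.2).1⟩,
    ⟨x.2 * x.1, mem_conjTransporter_smul.1 ((conjTransporter_inf _ _ _).subset x.2.2).2⟩)
  left_inv p := by simp
  right_inv x := Sigma.subtype_ext (by simp) rfl

theorem card_conjTransporter_mul_card_conjTransporter [Fintype G] (H V W : Subgroup G) :
    Nat.card (conjTransporter H V) * Nat.card (conjTransporter H W) =
      ∑ c : G, Nat.card (conjTransporter H (V ⊓ ConjAct.toConjAct c • W)) := by
  rw [← Nat.card_prod, Nat.card_congr (conjTransporterProdEquiv H V W), Nat.card_sigma]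

end Subgroup

namespace DoubleCoset

variable {G : Type*} [Group G]

theorem doubleCoset_eq_preimage_orbit (V W : Subgroup G) (g : G) :
    doubleCoset g V W = QuotientGroup.mk ⁻¹' orbit V (g : G ⧸ W) := by
  ext x
  simp only [mem_doubleCoset, Set.mem_preimage, mem_orbit_iff, Subtype.exists]
  constructor
  · rintro ⟨v, hv, w, hw, rfl⟩
    exact ⟨v, hv, QuotientGroup.eq.2 (by simpa [mul_assoc] using hw)⟩
  · rintro ⟨v, hv, hx⟩
    exact ⟨v, hv, _, QuotientGroup.eq.1 hx, (mul_inv_cancel_left (v * g) x).symm⟩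

theorem card_doubleCoset_mul_card_inf [Finite G] (V W : Subgroup G) (g : G) :
    Nat.card (doubleCoset g V W) * Nat.card (V ⊓ ConjAct.toConjAct g • W : Subgroup G) =
      Nat.card V * Nat.card W := by
  rw [doubleCoset_eq_preimage_orbit,
    Nat.card_congr (QuotientGroup.preimageMkEquivSubgroupProdSet W _), Nat.card_prod,
    ← Subgroup.card_stabilizer_mk, ← (stabilizer V (g : G ⧸ W)).card_mul_index,
    index_stabilizer, Nat.card_coe_set_eq]
  ring

instance [Finite G] (H K : Subgroup G) : Finite (Quotient (H : Set G) K) := Quotient.finite _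

theorem sum_eq_finsum_card_smul [Fintype G] {M : Type*} [AddCommMonoid M] (H K : Subgroup G)
    {f : G → M} (hf : ∀ h ∈ H, ∀ k ∈ K, ∀ g, f (h * g * k) = f g) :
    ∑ g, f g =
      ∑ᶠ C : Quotient (H : Set G) K, Nat.card (doubleCoset C.out H K) • f C.out := by
  classical
  have := Fintype.ofFinite (Quotient (H : Set G) K)
  rw [finsum_eq_sum_of_fintype, ← Fintype.sum_fiberwise (mk H K) f]
  refine Finset.sum_congr rfl fun C _ => ?_
  have hC : ∀ g : {g // mk H K g = C}, f g = f C.out := by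
    rintro ⟨g, rfl⟩
    obtain ⟨h, k, hh, hk, hout⟩ := mk_out_eq_mul H K g
    rw [hout, hf h hh k hk]
  rw [Fintype.sum_congr _ _ hC, Finset.sum_const, Finset.card_univ, ← Nat.card_eq_fintype_card]
  congr 1
  exact Nat.card_congr (Equiv.subtypeEquivRight fun g => (mem_quotToDoubleCoset_iff C g).symm)

end DoubleCoset

namespace Subgroup

variable {G : Type*} [Group G]

theorem card_fixedPoints_mul_card_fixedPoints [Fintype G] (H V W : Subgroup G) :
    Nat.card (fixedPoints H (G ⧸ V)) * Nat.card (fixedPoints H (G ⧸ W)) =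
      ∑ᶠ C : DoubleCoset.Quotient (V : Set G) W,
        Nat.card (fixedPoints H (G ⧸ (V ⊓ ConjAct.toConjAct C.out • W))) := by
  refine Nat.eq_of_mul_eq_mul_left
    (Nat.mul_pos (Nat.card_pos (α := V)) (Nat.card_pos (α := W))) ?_
  calc Nat.card V * Nat.card W *
        (Nat.card (fixedPoints H (G ⧸ V)) * Nat.card (fixedPoints H (G ⧸ W)))
      = Nat.card (conjTransporter H V) * Nat.card (conjTransporter H W) := by
        rw [card_conjTransporter, card_conjTransporter]
        ring
    _ = ∑ g : G, Nat.card (conjTransporter H (V ⊓ ConjAct.toConjAct g • W)) :=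
        card_conjTransporter_mul_card_conjTransporter H V W
    _ = ∑ᶠ C : DoubleCoset.Quotient (V : Set G) W,
          Nat.card (DoubleCoset.doubleCoset C.out V W) •
            Nat.card (conjTransporter H (V ⊓ ConjAct.toConjAct C.out • W)) :=
        DoubleCoset.sum_eq_finsum_card_smul V W fun v hv w hw g => by
          rw [inf_smul_mul_mul_eq V W hv hw, card_conjTransporter_smul]
    _ = ∑ᶠ C : DoubleCoset.Quotient (V : Set G) W, Nat.card V * Nat.card W *
          Nat.card (fixedPoints H (G ⧸ (V ⊓ ConjAct.toConjAct C.out • W))) :=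
        finsum_congr fun C => by
          rw [smul_eq_mul, card_conjTransporter, ← mul_assoc,
            DoubleCoset.card_doubleCoset_mul_card_inf]
    _ = _ := (mul_finsum _ _).symm

theorem natCast_card_fixedPoints_mul_pow_div {R : Type*} [CommSemiring R] (H K : Subgroup G)
    {m n : ℕ} (hm : Nat.card K ∣ m) (hn : Nat.card K ∣ n) (s t : R) :
    (Nat.card (fixedPoints H (G ⧸ K)) : R) * (s ^ (m / Nat.card H) * t ^ (n / Nat.card H)) =
      Nat.card (fixedPoints H (G ⧸ K)) *
        (s ^ (m / Nat.card K) * t ^ (n / Nat.card K)) ^ (Nat.card K / Nat.card H) := by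
  rcases eq_or_ne (Nat.card (fixedPoints H (G ⧸ K))) 0 with h0 | h0
  · simp [h0]
  · have hHK := card_dvd_of_card_fixedPoints_ne_zero h0
    rw [mul_pow, ← pow_mul, ← pow_mul, Nat.div_mul_div hm hHK, Nat.div_mul_div hn hHK]

end Subgroup

/-- **Modified Mackey formula.**  For subgroups `H, V, W` of a finite group `G` and
elements `s, t` of a commutative ring `R`,
`(|(G/V)^H| s^{(V:H)}) · (|(G/W)^H| t^{(W:H)})
  = Σ_{VgW ∈ V\G/W} |(G/(V ∩ gWg⁻¹))^H| (s^{(V:V∩gWg⁻¹)} t^{(W:g⁻¹Vg∩W)})^{(V∩gWg⁻¹:H)}`,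
the sum being taken over representatives `g` of the double cosets `V\G/W`. -/
theorem modified_mackey_formula (G : Type u) [Group G] [Fintype G]
    (R : Type v) [CommRing R] (H V W : Subgroup G) (s t : R) :
    ((Nat.card (MulAction.fixedPoints H (G ⧸ V)) : R) *
        s ^ (Nat.card V / Nat.card H)) *
      ((Nat.card (MulAction.fixedPoints H (G ⧸ W)) : R) *
        t ^ (Nat.card W / Nat.card H)) =
    ∑ᶠ C : DoubleCoset.Quotient (V : Set G) (W : Set G),
      (Nat.card (MulAction.fixedPoints H
          (G ⧸ (V ⊓ ConjAct.toConjAct (Quotient.out C) • W))) : R) *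
        (s ^ (Nat.card V /
              Nat.card ((V ⊓ ConjAct.toConjAct (Quotient.out C) • W : Subgroup G))) *
         t ^ (Nat.card W /
              Nat.card ((ConjAct.toConjAct (Quotient.out C)⁻¹ • V ⊓ W : Subgroup G)))) ^
          (Nat.card ((V ⊓ ConjAct.toConjAct (Quotient.out C) • W : Subgroup G)) / Nat.card H) := by
  calc _ = ((Nat.card (fixedPoints H (G ⧸ V)) * Nat.card (fixedPoints H (G ⧸ W)) : ℕ) : R) *
          (s ^ (Nat.card V / Nat.card H) * t ^ (Nat.card W / Nat.card H)) := by
        push_cast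
        ring
    _ = ∑ᶠ C : DoubleCoset.Quotient (V : Set G) W,
          (Nat.card (fixedPoints H (G ⧸ (V ⊓ ConjAct.toConjAct C.out • W))) : R) *
            (s ^ (Nat.card V / Nat.card H) * t ^ (Nat.card W / Nat.card H)) := by
        rw [Subgroup.card_fixedPoints_mul_card_fixedPoints, Nat.cast_finsum,
          finsum_mul' _ _ (Set.toFinite _)]
    _ = _ := finsum_congr fun C => by
        rw [Subgroup.card_inv_smul_inf]
        exact Subgroup.natCast_card_fixedPoints_mul_pow_div H _
          (Subgroup.card_dvd_of_le inf_le_left)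
          (Subgroup.card_inv_smul_inf V W C.out ▸ Subgroup.card_dvd_of_le inf_le_right) s t
end

section
/- Let γ : G → G' be a surjective homomorphism of finite groups and let R be a commutative ring. Define the restriction map restr : W_G(R) → W_{G'}(R) by (restr(x))_{V'} = x_{γ⁻¹(V')} for each conjugacy class of subgroups V' ≤ G'. Then for every subgroup H ≤ G' and every x ∈ W_G(R), the ghost maps are compatible: φ^{G'}_H(restr(x)) = φ^{G}_{γ⁻¹(H)}(x). -/
open MulAction Pointwise
open scoped Classical

/-- The restriction map `restr : W_G(R) → W_{G'}(R)` along a surjective homomorphism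
`γ : G → G'`, given by `(restr x)_{V'} = x_{γ⁻¹(V')}`. -/
noncomputable def wittRestr {G : Type u} {G' : Type v} [Group G] [Group G']
    (γ : G →* G') {R : Type w} (x : SubgroupConjClasses G → R) :
    SubgroupConjClasses G' → R :=
  fun C' =>
    x (Quotient.mk _ (Subgroup.comap γ (Quotient.out C')) : SubgroupConjClasses G)

section AuxLemmas

variable {G : Type u} {G' : Type v} [Group G] [Group G'] (γ : G →* G')


universe u v

variable {G : Type u} {G' : Type v} [Group G] [Group G'] (γ : G →* G')

theorem comap_conj_smul (g : G) (V' : Subgroup G') :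
    Subgroup.comap γ (ConjAct.toConjAct (γ g) • V') =
      ConjAct.toConjAct g • Subgroup.comap γ V' := by
  ext x
  simp only [Subgroup.mem_pointwise_smul_iff_inv_smul_mem, Subgroup.mem_comap,
    ConjAct.smul_def, ConjAct.ofConjAct_inv, ConjAct.ofConjAct_toConjAct, map_mul, map_inv]

theorem conjAct_surj (hγ : Function.Surjective γ) (g' : ConjAct G') :
    ∃ g : G, ConjAct.toConjAct (γ g) = g' := by
  obtain ⟨g, hg⟩ := hγ (ConjAct.ofConjAct g')
  exact ⟨g, by rw [hg]; simp⟩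

theorem subconj_comap_iff (hγ : Function.Surjective γ) (H V' : Subgroup G') :
    Subconj (Subgroup.comap γ H) (Subgroup.comap γ V') ↔ Subconj H V' := by
  constructor
  · rintro ⟨g, hg⟩
    obtain ⟨a, ha⟩ := ConjAct.toConjAct.surjective g
    refine ⟨ConjAct.toConjAct (γ a), ?_⟩
    rw [← ha, ← comap_conj_smul] at hg
    have := Subgroup.map_comap_eq_self_of_surjective (f := γ) hγ
    calc H = Subgroup.map γ (Subgroup.comap γ H) := (this H).symm
      _ ≤ Subgroup.map γ (Subgroup.comap γ (ConjAct.toConjAct (γ a) • V')) :=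
          Subgroup.map_mono hg
      _ = ConjAct.toConjAct (γ a) • V' := this _
  · rintro ⟨g', hg'⟩
    obtain ⟨a, ha⟩ := conjAct_surj γ hγ g'
    exact ⟨ConjAct.toConjAct a, by
      rw [← comap_conj_smul, ha]; exact Subgroup.comap_mono hg'⟩
theorem card_comap_eq (hγ : Function.Surjective γ) (V' : Subgroup G') :
    Nat.card (Subgroup.comap γ V') = Nat.card V' * Nat.card γ.ker := by
  classical
  set K := Subgroup.comap γ V'
  let f : K →* V' := γ.subgroupComap V'
  have hcoe : ∀ a : K, (f a : G') = γ (a : G) := fun _ => rfl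
  have hker : ∀ a : K, a ∈ f.ker ↔ γ (a : G) = 1 := by
    intro a
    rw [MonoidHom.mem_ker, ← hcoe]
    exact ⟨fun h => by rw [h]; rfl, fun h => Subtype.ext h⟩
  have hf : Function.Surjective f := by
    rintro ⟨v', hv'⟩
    obtain ⟨g, hg⟩ := hγ v'
    exact ⟨⟨g, by simpa [K, Subgroup.mem_comap, hg] using hv'⟩, by
      apply Subtype.ext; simpa [hcoe] using hg⟩
  have h1 : Nat.card K = Nat.card (K ⧸ f.ker) * Nat.card f.ker :=
    Subgroup.card_eq_card_quotient_mul_card_subgroup f.ker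
  have h2 : Nat.card (K ⧸ f.ker) = Nat.card V' :=
    Nat.card_congr (QuotientGroup.quotientKerEquivOfSurjective f hf).toEquiv
  have h3 : Nat.card f.ker = Nat.card γ.ker := by
    refine Nat.card_congr ⟨fun k => ⟨(k : K), (hker _).mp k.2⟩,
      fun k => ⟨⟨(k : G), ?_⟩, (hker _).mpr k.2⟩, fun k => rfl, fun k => rfl⟩
    have : γ (k : G) = 1 := k.2
    simp [K, Subgroup.mem_comap, this, one_mem]
  rw [h1, h2, h3]
theorem card_fixedPoints_comap (hγ : Function.Surjective γ) (H V' : Subgroup G') :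
    Nat.card (MulAction.fixedPoints H (G' ⧸ V')) =
      Nat.card (MulAction.fixedPoints (Subgroup.comap γ H) (G ⧸ Subgroup.comap γ V')) := by
  classical
  let F : G ⧸ Subgroup.comap γ V' → G' ⧸ V' :=
    Quotient.map' γ (by
      intro a b hab
      rw [QuotientGroup.leftRel_apply] at hab ⊢
      simpa using hab)
  have hbij : Function.Bijective F := by
    constructor
    · intro q1 q2
      refine Quotient.inductionOn₂' q1 q2 ?_
      intro a b hab
      have h2 : (QuotientGroup.leftRel V').r (γ a) (γ b) := Quotient.exact' hab
      rw [QuotientGroup.leftRel_apply] at h2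
      apply Quotient.sound'
      rw [QuotientGroup.leftRel_apply]
      simpa using h2
    · intro q'
      refine Quotient.inductionOn' q' ?_
      intro g'
      obtain ⟨g, hg⟩ := hγ g'
      exact ⟨Quotient.mk'' g, by simp [F, Quotient.map'_mk'', hg]⟩
  let e : (G ⧸ Subgroup.comap γ V') ≃ (G' ⧸ V') := Equiv.ofBijective F hbij
  have hequiv : ∀ (g : G) (q : G ⧸ Subgroup.comap γ V'), e (g • q) = γ g • e q := by
    intro g q
    refine Quotient.inductionOn' q ?_
    intro a
    have hF : ∀ b : G, e (QuotientGroup.mk b) = QuotientGroup.mk (γ b) := fun b => rfl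
    show e (g • QuotientGroup.mk a) = γ g • e (QuotientGroup.mk a)
    rw [MulAction.Quotient.smul_mk, hF, hF, MulAction.Quotient.smul_mk]
    simp [smul_eq_mul]
  refine (Nat.card_congr (Equiv.subtypeEquiv e ?_)).symm
  intro q
  simp only [MulAction.mem_fixedPoints]
  constructor
  · intro hq h
    obtain ⟨g, hg⟩ := hγ (h : G')
    have hgm : g ∈ Subgroup.comap γ H := by
      simp [Subgroup.mem_comap, hg, SetLike.coe_mem]
    have h1 : (g : G) • q = q := hq ⟨g, hgm⟩
    calc (h : ↥H) • e q = γ g • e q := by rw [hg]; rfl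
      _ = e (g • q) := (hequiv g q).symm
      _ = e q := by rw [h1]
  · intro hq u
    apply e.injective
    have : γ (u : G) ∈ H := u.2
    calc e ((u : ↥(Subgroup.comap γ H)) • q) = γ (u : G) • e q := hequiv (u : G) q
      _ = (⟨γ (u : G), this⟩ : ↥H) • e q := rfl
      _ = e q := hq _
theorem card_fixedPoints_congr {G : Type*} [Group G] {α β : Type*} [MulAction G α]
    [MulAction G β] (U : Subgroup G) (e : α ≃ β) (he : ∀ (g : G) (a : α), e (g • a) = g • e a) :
    Nat.card (MulAction.fixedPoints U α) = Nat.card (MulAction.fixedPoints U β) := by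
  refine Nat.card_congr (Equiv.subtypeEquiv e ?_)
  intro a
  simp only [MulAction.mem_fixedPoints]
  constructor
  · intro ha u
    exact (he (u : G) a).symm.trans (congrArg e (ha u))
  · intro ha u
    exact e.injective ((he (u : G) a).trans (ha u))

theorem subconj_smul_iff {G : Type*} [Group G] (U V : Subgroup G) (g : ConjAct G) :
    Subconj U (g • V) ↔ Subconj U V := by
  constructor
  · rintro ⟨h, hh⟩
    exact ⟨h * g, by rwa [mul_smul]⟩
  · rintro ⟨h, hh⟩
    exact ⟨h * g⁻¹, by rwa [mul_smul, inv_smul_smul]⟩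

theorem card_smul_subgroup {G : Type*} [Group G] (V : Subgroup G) (g : ConjAct G) :
    Nat.card ((g • V : Subgroup G) : Type _) = Nat.card V :=
  (Nat.card_congr (Subgroup.equivSMul g V).toEquiv).symm

theorem card_fixedPoints_smul {G : Type*} [Group G] (U V : Subgroup G) (g : ConjAct G) :
    Nat.card (MulAction.fixedPoints U (G ⧸ (g • V : Subgroup G))) =
      Nat.card (MulAction.fixedPoints U (G ⧸ V)) := by
  set c : G := ConjAct.ofConjAct g with hc
  have h1 : ∀ a b : G, (QuotientGroup.leftRel V).r a b →
      (QuotientGroup.leftRel (g • V : Subgroup G)).r (a * c⁻¹) (b * c⁻¹) := by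
    intro a b hab
    rw [QuotientGroup.leftRel_apply] at hab ⊢
    rw [Subgroup.mem_pointwise_smul_iff_inv_smul_mem, ConjAct.smul_def]
    have : (ConjAct.ofConjAct g⁻¹) * ((a * c⁻¹)⁻¹ * (b * c⁻¹)) * (ConjAct.ofConjAct g⁻¹)⁻¹
        = a⁻¹ * b := by
      rw [ConjAct.ofConjAct_inv, ← hc]
      group
    rw [this]
    exact hab
  have h2 : ∀ a b : G, (QuotientGroup.leftRel (g • V : Subgroup G)).r a b →
      (QuotientGroup.leftRel V).r (a * c) (b * c) := by
    intro a b hab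
    rw [QuotientGroup.leftRel_apply] at hab ⊢
    rw [Subgroup.mem_pointwise_smul_iff_inv_smul_mem, ConjAct.smul_def,
      ConjAct.ofConjAct_inv, ← hc] at hab
    have : c⁻¹ * (a⁻¹ * b) * c⁻¹⁻¹ = (a * c)⁻¹ * (b * c) := by group
    rwa [this] at hab
  let e : (G ⧸ (g • V : Subgroup G)) ≃ (G ⧸ V) :=
    { toFun := Quotient.map' (fun a => a * c) h2
      invFun := Quotient.map' (fun a => a * c⁻¹) h1
      left_inv := by
        intro q
        refine Quotient.inductionOn' q ?_
        intro a
        simp [Quotient.map'_mk'', mul_assoc]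
      right_inv := by
        intro q
        refine Quotient.inductionOn' q ?_
        intro a
        simp [Quotient.map'_mk'', mul_assoc] }
  refine card_fixedPoints_congr U e ?_
  intro u q
  refine Quotient.inductionOn' q ?_
  intro a
  show e (u • QuotientGroup.mk a) = u • e (QuotientGroup.mk a)
  have hE : ∀ b : G, e (QuotientGroup.mk b) = QuotientGroup.mk (b * c) := fun b => rfl
  rw [MulAction.Quotient.smul_mk, hE, hE, MulAction.Quotient.smul_mk]
  simp [smul_eq_mul, mul_assoc]
theorem out_mk_orbit {G : Type*} [Group G] (V : Subgroup G) :
    ∃ g : ConjAct G,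
      g • V = Quotient.out (Quotient.mk'' V : SubgroupConjClasses G) := by
  have h : (MulAction.orbitRel (ConjAct G) (Subgroup G))
      (Quotient.out (Quotient.mk'' V : SubgroupConjClasses G)) V :=
    Quotient.exact' (Quotient.out_eq' _)
  rw [MulAction.orbitRel_apply] at h
  exact MulAction.mem_orbit_iff.mp h

theorem mk_smul_eq {G : Type*} [Group G] (V : Subgroup G) (g : ConjAct G) :
    (Quotient.mk'' (g • V) : SubgroupConjClasses G) = Quotient.mk'' V := by
  apply Quotient.sound'
  rw [MulAction.orbitRel_apply]
  exact MulAction.mem_orbit_iff.mpr ⟨g, rfl⟩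

theorem phi_inj (hγ : Function.Surjective γ) (C₁ C₂ : SubgroupConjClasses G')
    (h : (Quotient.mk'' (Subgroup.comap γ (Quotient.out C₁)) : SubgroupConjClasses G) =
      Quotient.mk'' (Subgroup.comap γ (Quotient.out C₂))) : C₁ = C₂ := by
  have h2 : (MulAction.orbitRel (ConjAct G) (Subgroup G))
      (Subgroup.comap γ (Quotient.out C₁))
      (Subgroup.comap γ (Quotient.out C₂)) := Quotient.exact' h
  rw [MulAction.orbitRel_apply] at h2
  obtain ⟨g, hg⟩ := MulAction.mem_orbit_iff.mp h2
  set a : G := ConjAct.ofConjAct g with ha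
  rw [show g = ConjAct.toConjAct a from rfl, ← comap_conj_smul] at hg
  have h3 : ConjAct.toConjAct (γ a) • Quotient.out C₂ = Quotient.out C₁ :=
    Subgroup.comap_injective hγ hg
  have h4 : (Quotient.mk'' (Quotient.out C₁) : SubgroupConjClasses G') =
      Quotient.mk'' (Quotient.out C₂) := by
    rw [← h3, mk_smul_eq]
  rwa [Quotient.out_eq', Quotient.out_eq'] at h4

theorem phi_surj_aux (hγ : Function.Surjective γ) (C : SubgroupConjClasses G)
    (hker : γ.ker ≤ Quotient.out C) :
    (Quotient.mk'' (Subgroup.comap γ (Quotient.out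
        (Quotient.mk'' (Subgroup.map γ (Quotient.out C)) : SubgroupConjClasses G')))
      : SubgroupConjClasses G) = C := by
  obtain ⟨g', hg'⟩ := out_mk_orbit (Subgroup.map γ (Quotient.out C))
  obtain ⟨a, ha⟩ := conjAct_surj γ hγ g'
  rw [← hg', ← ha, comap_conj_smul, Subgroup.comap_map_eq, sup_eq_left.mpr hker,
    mk_smul_eq, Quotient.out_eq']
theorem wittRestr_ghost' (G : Type u) (G' : Type u) [Group G] [Group G']
    [Fintype G] [Fintype G'] (γ : G →* G') (hγ : Function.Surjective γ)
    (R : Type v) [CommRing R] (H : Subgroup G') (x : SubgroupConjClasses G → R) :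
    ghost H (wittRestr γ x) = ghost (Subgroup.comap γ H) x := by
  classical
  unfold ghost
  rw [finsum_eq_sum_of_fintype, finsum_eq_sum_of_fintype]
  set f : SubgroupConjClasses G' → R := fun C' =>
    if Subconj H (Quotient.out C') then
      (Nat.card (MulAction.fixedPoints H (G' ⧸ (Quotient.out C' : Subgroup G'))) : R) *
        wittRestr γ x C' ^ (Nat.card (Quotient.out C' : Subgroup G') / Nat.card H)
    else 0 with hf
  set gg : SubgroupConjClasses G → R := fun C =>
    if Subconj (Subgroup.comap γ H) (Quotient.out C) then
      (Nat.card (MulAction.fixedPoints (Subgroup.comap γ H)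
          (G ⧸ (Quotient.out C : Subgroup G))) : R) *
        x C ^ (Nat.card (Quotient.out C : Subgroup G) / Nat.card (Subgroup.comap γ H))
    else 0 with hgg
  show ∑ C', f C' = ∑ C, gg C
  have hkerpos : 0 < Nat.card γ.ker := Nat.card_pos
  have key : ∀ C' : SubgroupConjClasses G',
      f C' = gg (Quotient.mk'' (Subgroup.comap γ (Quotient.out C'))) := by
    intro C'
    obtain ⟨g, hg⟩ := out_mk_orbit (Subgroup.comap γ (Quotient.out C'))
    set W : Subgroup G :=
      Quotient.out (Quotient.mk'' (Subgroup.comap γ (Quotient.out C'))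
        : SubgroupConjClasses G) with hW
    have e1 : Subconj (Subgroup.comap γ H) W ↔ Subconj H (Quotient.out C') := by
      rw [← hg, subconj_smul_iff, subconj_comap_iff γ hγ]
    have e2 : Nat.card (MulAction.fixedPoints (Subgroup.comap γ H) (G ⧸ (W : Subgroup G))) =
        Nat.card (MulAction.fixedPoints H (G' ⧸ (Quotient.out C' : Subgroup G'))) := by
      have h3 : Nat.card (MulAction.fixedPoints (Subgroup.comap γ H) (G ⧸ (W : Subgroup G))) =
          Nat.card (MulAction.fixedPoints (Subgroup.comap γ H)
            (G ⧸ (g • Subgroup.comap γ (Quotient.out C') : Subgroup G))) :=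
        congrArg (fun S : Subgroup G =>
          Nat.card (MulAction.fixedPoints (Subgroup.comap γ H) (G ⧸ S))) hg.symm
      rw [h3, card_fixedPoints_smul, ← card_fixedPoints_comap γ hγ]
    have e3 : Nat.card (W : Subgroup G) / Nat.card (Subgroup.comap γ H) =
        Nat.card (Quotient.out C' : Subgroup G') / Nat.card H := by
      have h4 : Nat.card (W : Subgroup G) =
          Nat.card ((g • Subgroup.comap γ (Quotient.out C') : Subgroup G) : Type _) :=
        congrArg (fun S : Subgroup G => Nat.card S) hg.symm
      rw [h4, card_smul_subgroup, card_comap_eq γ hγ, card_comap_eq γ hγ,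
        Nat.mul_div_mul_right _ _ hkerpos]
    have e4 : wittRestr γ x C' =
        x (Quotient.mk'' (Subgroup.comap γ (Quotient.out C'))) := rfl
    show (if Subconj H (Quotient.out C') then
        (Nat.card (MulAction.fixedPoints H (G' ⧸ (Quotient.out C' : Subgroup G'))) : R) *
          wittRestr γ x C' ^ (Nat.card (Quotient.out C' : Subgroup G') / Nat.card H)
      else 0) =
      (if Subconj (Subgroup.comap γ H) W then
        (Nat.card (MulAction.fixedPoints (Subgroup.comap γ H) (G ⧸ (W : Subgroup G))) : R) *
          x (Quotient.mk'' (Subgroup.comap γ (Quotient.out C'))) ^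
            (Nat.card (W : Subgroup G) / Nat.card (Subgroup.comap γ H))
      else 0)
    by_cases hsub : Subconj H (Quotient.out C')
    · rw [if_pos hsub, if_pos (e1.mpr hsub), e2, e3, e4]
    · rw [if_neg hsub, if_neg (fun hc => hsub (e1.mp hc))]
  refine Finset.sum_bij_ne_zero
    (fun C' _ _ => Quotient.mk'' (Subgroup.comap γ (Quotient.out C')))
    (fun _ _ _ => Finset.mem_univ _) ?_ ?_ ?_
  · intro a₁ _ _ a₂ _ _ h
    exact phi_inj γ hγ a₁ a₂ h
  · intro C _ hC
    have hsub : Subconj (Subgroup.comap γ H) (Quotient.out C) := by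
      by_contra hn
      exact hC (by rw [hgg]; simp [hn])
    obtain ⟨g, hg⟩ := hsub
    have hker : γ.ker ≤ Quotient.out C := by
      have h1 : γ.ker ≤ g • Quotient.out C :=
        le_trans (fun y hy => by
          simp only [Subgroup.mem_comap]
          rw [MonoidHom.mem_ker] at hy
          simp [hy, one_mem]) hg
      have h2 : g⁻¹ • γ.ker ≤ g⁻¹ • (g • Quotient.out C) := by
        rw [Subgroup.pointwise_smul_le_pointwise_smul_iff]
        exact h1
      rwa [(MonoidHom.normal_ker γ).conjAct, inv_smul_smul] at h2
    refine ⟨Quotient.mk'' (Subgroup.map γ (Quotient.out C)), Finset.mem_univ _, ?_, ?_⟩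
    · rw [key, phi_surj_aux γ hγ C hker]
      exact hC
    · exact phi_surj_aux γ hγ C hker
  · intro C' _ _
    exact key C'

end AuxLemmas

/-- For a surjective homomorphism `γ : G → G'` of finite groups, the restriction map
`restr : W_G(R) → W_{G'}(R)`, `(restr x)_{V'} = x_{γ⁻¹(V')}`, is compatible with the
ghost maps: for every subgroup `H ≤ G'` and every `x ∈ W_G(R)` one has
`φ^{G'}_H(restr x) = φ^G_{γ⁻¹(H)}(x)`. -/
theorem wittRestr_ghost (G : Type u) (G' : Type u) [Group G] [Group G']
    [Fintype G] [Fintype G'] (γ : G →* G') (hγ : Function.Surjective γ)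
    (R : Type v) [CommRing R] (H : Subgroup G') (x : SubgroupConjClasses G → R) :
    ghost H (wittRestr γ x) = ghost (Subgroup.comap γ H) x :=
  wittRestr_ghost' G G' γ hγ R H x
end
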